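/- Let f : ℝ^d → ℝ be μ-strongly convex and L-smooth with global minimizer θ*, let α ∈ (0, 1/(Ld)], let (v_k) be i.i.d. random vectors in ℝ^d with independent Rademacher components, and define the stochastic sequence θ_{k+1} = θ_k − α (∇f(θ_k)·v_k) v_k from a deterministic initial point θ_0. Then for all k ∈ ℕ, E[f(θ_k) − f(θ*)] ≤ (1 − αμ)^k (f(θ_0) − f(θ*)), where the expectation is over all the randomness of the vectors v_0, ..., v_{k−1}. -/

import Mathlib

open MeasureTheory ProbabilityTheory
open scoped RealInnerProductSpace ENNReal

/-!
Smoothness gives the descent inequality `f (θ - α g_v(θ)) ≤ f θ - (α / 2) (∇f(θ)·v)²` as soon as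
`α L ‖v‖² ≤ 1`, and `‖v‖² = d` for a Rademacher vector. Since `v_k` is independent of `θ_k` and
`E[v vᵀ] = I`, integrating out `v_k` first (Tonelli on the product law) turns `(∇f(θ_k)·v_k)²`
into `‖∇f(θ_k)‖²`, which strong convexity bounds below by `2μ (f θ_k - f θ*)`
(Polyak–Łojasiewicz). So the expected gap contracts by `1 - αμ` at every step. Expectations are
taken as lower Lebesgue integrals of the nonnegative gaps, so the iterates never need to be shown
integrable.
-/

section Smooth

variable {F : Type*} [NormedAddCommGroup F] [InnerProductSpace ℝ F] [CompleteSpace F]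
  {f : F → ℝ} {μ L : ℝ}

noncomputable def forwardGradient (f : F → ℝ) (x v : F) : F := ⟪gradient f x, v⟫ • v

theorem continuous_gradient_of_lipschitz
    (hlip : ∀ x y, ‖gradient f x - gradient f y‖ ≤ L * ‖x - y‖) : Continuous (gradient f) :=
  (LipschitzWith.of_dist_le' fun x y => by simpa only [dist_eq_norm] using hlip x y).continuous

theorem le_add_inner_gradient_add_of_lipschitz_gradient (hf : Differentiable ℝ f)
    (hlip : ∀ x y, ‖gradient f x - gradient f y‖ ≤ L * ‖x - y‖) (x y : F) :
    f x ≤ f y + ⟪gradient f y, x - y⟫ + L / 2 * ‖x - y‖ ^ 2 := by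
  set w := x - y
  -- the Lipschitz bound makes `φ' ≤ 0` on `[0, 1]`, and `φ 1 ≤ φ 0` is the claim
  let φ : ℝ → ℝ := fun t => f (y + t • w) - t * ⟪gradient f y, w⟫ - L / 2 * t ^ 2 * ‖w‖ ^ 2
  let φ' : ℝ → ℝ := fun t => ⟪gradient f (y + t • w) - gradient f y, w⟫ - L * t * ‖w‖ ^ 2
  have hφ : ∀ t, HasDerivAt φ (φ' t) t := by
    intro t
    have hline : HasDerivAt (fun t : ℝ => y + t • w) w t := by
      simpa using ((hasDerivAt_id t).smul_const w).const_add y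
    have hf' := ((hf _).hasGradientAt.hasFDerivAt).comp_hasDerivAt t hline
    refine ((hf'.sub ((hasDerivAt_id t).mul_const ⟪gradient f y, w⟫)).sub
      (((hasDerivAt_pow 2 t).const_mul (L / 2)).mul_const (‖w‖ ^ 2))).congr_deriv ?_
    simp only [φ', inner_sub_left, InnerProductSpace.toDual_apply_apply]
    ring
  have hanti : AntitoneOn φ (Set.Icc 0 1) :=
    antitoneOn_of_hasDerivWithinAt_nonpos (convex_Icc 0 1)
      (fun t _ => (hφ t).continuousAt.continuousWithinAt)
      (fun t _ => (hφ t).hasDerivWithinAt) fun t ht => by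
        rw [interior_Icc] at ht
        have := real_inner_le_norm (gradient f (y + t • w) - gradient f y) w
        have := hlip (y + t • w) y
        simp only [add_sub_cancel_left, norm_smul, Real.norm_of_nonneg ht.1.le] at this
        simp only [φ']
        nlinarith [norm_nonneg w]
  have := hanti (by simp) (by simp) zero_le_one
  simp only [φ, zero_smul, add_zero, one_smul, add_sub_cancel, w] at this
  linarith

theorem apply_sub_smul_forwardGradient_le (hf : Differentiable ℝ f)
    (hlip : ∀ x y, ‖gradient f x - gradient f y‖ ≤ L * ‖x - y‖) {α : ℝ} (hα : 0 ≤ α) {x v : F}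
    (hv : α * L * ‖v‖ ^ 2 ≤ 1) :
    f (x - α • forwardGradient f x v) ≤ f x - α / 2 * ⟪gradient f x, v⟫ ^ 2 := by
  have hdesc := le_add_inner_gradient_add_of_lipschitz_gradient hf hlip
    (x - α • forwardGradient f x v) x
  rw [forwardGradient, smul_smul] at hdesc ⊢
  rw [sub_sub_cancel_left, inner_neg_right, norm_neg, real_inner_smul_right, norm_smul, mul_pow,
    Real.norm_eq_abs, sq_abs] at hdesc
  nlinarith [mul_le_mul_of_nonneg_left hv (mul_nonneg hα (sq_nonneg ⟪gradient f x, v⟫))]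

theorem two_mul_sub_le_norm_gradient_sq (hμ : 0 < μ)
    (hsc : ∀ x y : F, f y + ⟪gradient f y, x - y⟫ + μ / 2 * ‖x - y‖ ^ 2 ≤ f x)
    (θs x : F) : 2 * μ * (f x - f θs) ≤ ‖gradient f x‖ ^ 2 := by
  have h := hsc θs x
  have := real_inner_le_norm (gradient f x) (x - θs)
  rw [← neg_sub, inner_neg_right, norm_neg] at h
  nlinarith [sq_nonneg (μ * ‖x - θs‖ - ‖gradient f x‖), norm_nonneg (x - θs)]

theorem le_of_strongConvex_of_lipschitz_gradient [Nontrivial F]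
    (hsc : ∀ x y : F, f y + ⟪gradient f y, x - y⟫ + μ / 2 * ‖x - y‖ ^ 2 ≤ f x)
    (hlip : ∀ x y, ‖gradient f x - gradient f y‖ ≤ L * ‖x - y‖) : μ ≤ L := by
  obtain ⟨u, hu⟩ := exists_ne (0 : F)
  have h₁ := hsc u 0
  have h₂ := hsc 0 u
  have h₃ := real_inner_le_norm (gradient f u - gradient f 0) u
  have h₄ := hlip u 0
  simp only [sub_zero, zero_sub, inner_neg_right, norm_neg, inner_sub_left] at h₁ h₂ h₃ h₄
  have hpos : 0 < ‖u‖ ^ 2 := by positivity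
  nlinarith [norm_nonneg u]

end Smooth

theorem ENNReal.le_ofReal_pow_mul_of_add_mul_le {e : ℕ → ℝ≥0∞} {r b : ℝ} (hr₀ : 0 ≤ r)
    (hr₁ : r ≤ 1) (he₀ : e 0 ≤ ENNReal.ofReal b)
    (he : ∀ k, e (k + 1) + ENNReal.ofReal r * e k ≤ e k) (k : ℕ) :
    e k ≤ ENNReal.ofReal ((1 - r) ^ k * b) := by
  induction k with
  | zero => simpa using he₀
  | succ k ih =>
    have hek : e k ≠ ∞ := ne_top_of_le_ne_top ENNReal.ofReal_ne_top ih
    calc e (k + 1) ≤ e k - ENNReal.ofReal r * e k :=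
          ENNReal.le_sub_of_add_le_right (by finiteness) (he k)
      _ = ENNReal.ofReal (1 - r) * e k := by
          rw [ENNReal.ofReal_sub _ hr₀, ENNReal.ofReal_one, ENNReal.sub_mul fun _ _ => hek,
            one_mul]
      _ ≤ ENNReal.ofReal (1 - r) * ENNReal.ofReal ((1 - r) ^ k * b) := by gcongr
      _ = ENNReal.ofReal ((1 - r) ^ (k + 1) * b) := by
          rw [← ENNReal.ofReal_mul (by linarith), pow_succ', mul_assoc]

section Probability

variable {Ω : Type*} [MeasurableSpace Ω] {P : Measure Ω}

def IsRademacher (X : Ω → ℝ) (P : Measure Ω) : Prop :=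
  P {ω | X ω = 1} = 1 / 2 ∧ P {ω | X ω = -1} = 1 / 2

namespace IsRademacher

variable [IsProbabilityMeasure P] {X : Ω → ℝ}

theorem ae_eq_one_or_eq_neg_one (h : IsRademacher X P) (hX : Measurable X) :
    ∀ᵐ ω ∂P, X ω = 1 ∨ X ω = -1 := by
  have h₁ : MeasurableSet {ω | X ω = 1} := hX (measurableSet_singleton 1)
  have h₂ : MeasurableSet {ω | X ω = -1} := hX (measurableSet_singleton (-1))
  have h₁₂ : NullMeasurableSet {ω | X ω = 1 ∨ X ω = -1} P := (h₁.union h₂).nullMeasurableSet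
  rw [ae_iff_measure_eq h₁₂, Set.ofPred_or,
    measure_union _ h₂, h.1, h.2, ENNReal.add_halves, measure_univ]
  exact Set.disjoint_left.2 fun ω (hω : X ω = 1) (hω' : X ω = -1) => by norm_num [hω] at hω'

theorem integral_eq_zero (h : IsRademacher X P) (hX : Measurable X) : ∫ ω, X ω ∂P = 0 := by
  have h₁ : MeasurableSet {ω | X ω = 1} := hX (measurableSet_singleton 1)
  have hX' : X =ᵐ[P] fun ω => 2 * Set.indicator {ω | X ω = 1} 1 ω - 1 := by
    filter_upwards [h.ae_eq_one_or_eq_neg_one hX] with ω hω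
    rcases hω with hω | hω <;> simp [Set.indicator, hω] <;> norm_num
  rw [integral_congr_ae hX', integral_sub ((integrable_const _).indicator h₁ |>.const_mul 2)
    (integrable_const 1), integral_const_mul, integral_indicator_one h₁, measureReal_def, h.1]
  simp

end IsRademacher

theorem integral_coord_mul_coord_of_isRademacher [IsProbabilityMeasure P] {ι : Type*}
    [DecidableEq ι] {Y : Ω → EuclideanSpace ℝ ι} (hY : Measurable Y)
    (hrad : ∀ i, IsRademacher (fun ω => Y ω i) P)
    (hindep : ∀ i j, i ≠ j → IndepFun (fun ω => Y ω i) (fun ω => Y ω j) P) (i j : ι) :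
    ∫ ω, Y ω i * Y ω j ∂P = if i = j then 1 else 0 := by
  have hYi : ∀ i, Measurable fun ω => Y ω i := fun i => by fun_prop
  split_ifs with hij
  · subst hij
    rw [integral_congr_ae (g := fun _ => (1 : ℝ)), integral_const, probReal_univ, one_smul]
    filter_upwards [(hrad i).ae_eq_one_or_eq_neg_one (hYi i)] with ω hω
    rcases hω with hω | hω <;> simp [hω]
  · rw [(hindep i j hij).integral_fun_mul_eq_mul_integral (hYi i).aestronglyMeasurable
      (hYi j).aestronglyMeasurable, (hrad i).integral_eq_zero (hYi i), zero_mul]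

theorem lintegral_ofReal_inner_sq_of_isotropic {ι : Type*} [Fintype ι] [DecidableEq ι]
    {Y : Ω → EuclideanSpace ℝ ι} (hint : ∀ i j, Integrable (fun ω => Y ω i * Y ω j) P)
    (hcov : ∀ i j, ∫ ω, Y ω i * Y ω j ∂P = if i = j then 1 else 0) (u : EuclideanSpace ℝ ι) :
    ∫⁻ ω, ENNReal.ofReal (⟪u, Y ω⟫ ^ 2) ∂P = ENNReal.ofReal (‖u‖ ^ 2) := by
  have hexpand : ∀ ω, ⟪u, Y ω⟫ ^ 2 = ∑ i, ∑ j, u i * u j * (Y ω i * Y ω j) := fun ω => by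
    simp only [PiLp.inner_apply, RCLike.inner_apply, conj_trivial, sq, Finset.sum_mul_sum]
    exact Finset.sum_congr rfl fun i _ => Finset.sum_congr rfl fun j _ => by ring
  have hint' : Integrable (fun ω => ⟪u, Y ω⟫ ^ 2) P := by
    simp only [hexpand]
    exact integrable_finsetSum _ fun i _ => integrable_finsetSum _ fun j _ =>
      (hint i j).const_mul _
  rw [← ofReal_integral_eq_lintegral_ofReal hint' (.of_forall fun ω => sq_nonneg _)]
  congr 1
  rw [EuclideanSpace.real_norm_sq_eq]
  simp only [hexpand]
  rw [integral_finsetSum _ fun i _ => integrable_finsetSum _ fun j _ => (hint i j).const_mul _]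
  simp only [integral_finsetSum _ fun j _ => (hint _ j).const_mul _, integral_const_mul, hcov,
    mul_ite, mul_one, mul_zero, Finset.sum_ite_eq, Finset.mem_univ, if_true]
  simp only [sq]

theorem ProbabilityTheory.IndepFun.lintegral_comp_eq_lintegral_lintegral [IsFiniteMeasure P]
    {α β : Type*} [MeasurableSpace α] [MeasurableSpace β] {X : Ω → α} {Y : Ω → β}
    (hXY : IndepFun X Y P) (hX : Measurable X) (hY : Measurable Y) {φ : α → β → ℝ≥0∞}
    (hφ : Measurable (Function.uncurry φ)) :
    ∫⁻ ω, φ (X ω) (Y ω) ∂P = ∫⁻ ω, ∫⁻ ω', φ (X ω) (Y ω') ∂P ∂P := by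
  calc ∫⁻ ω, φ (X ω) (Y ω) ∂P
      = ∫⁻ z, Function.uncurry φ z ∂(P.map fun ω => (X ω, Y ω)) :=
        (lintegral_map hφ (hX.prodMk hY)).symm
    _ = ∫⁻ x, ∫⁻ y, φ x y ∂(P.map Y) ∂(P.map X) := by
        rw [hXY.map_prod_eq_prod_map_map hX.aemeasurable hY.aemeasurable,
          lintegral_prod _ hφ.aemeasurable]
        rfl
    _ = ∫⁻ x, ∫⁻ ω', φ x (Y ω') ∂P ∂(P.map X) :=
        lintegral_congr fun x => lintegral_map (hφ.comp measurable_prodMk_left) hY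
    _ = ∫⁻ ω, ∫⁻ ω', φ (X ω) (Y ω') ∂P ∂P :=
        lintegral_map
          (hφ.comp (measurable_fst.prodMk (hY.comp measurable_snd))).lintegral_prod_right' hX

theorem ProbabilityTheory.iIndepFun.indepFun_of_measurable_biSup {ι : Type*} {β : ι → Type*}
    {m : ∀ i, MeasurableSpace (β i)} {ξ : ∀ i, Ω → β i} (h : iIndepFun ξ P)
    (hξ : ∀ i, Measurable (ξ i)) {S T : Set ι} (hST : Disjoint S T) {γ δ : Type*}
    [MeasurableSpace γ] [MeasurableSpace δ] {X : Ω → γ} {Y : Ω → δ}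
    (hX : Measurable[⨆ i ∈ S, (m i).comap (ξ i)] X)
    (hY : Measurable[⨆ i ∈ T, (m i).comap (ξ i)] Y) : IndepFun X Y P :=
  (IndepFun_iff_Indep _ _ _).2 <| indep_of_indep_of_le
    (indep_iSup_of_disjoint (fun i => (hξ i).comap_le) h.iIndep hST) hX.comap_le hY.comap_le

theorem lintegral_ofReal_inner_sq_of_isRademacher [IsProbabilityMeasure P] {ι : Type*}
    [Fintype ι] {X Y : Ω → EuclideanSpace ℝ ι} (hXY : IndepFun X Y P) (hX : Measurable X)
    (hY : Measurable Y) (hrad : ∀ i, IsRademacher (fun ω => Y ω i) P)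
    (hindep : ∀ i j, i ≠ j → IndepFun (fun ω => Y ω i) (fun ω => Y ω j) P) :
    ∫⁻ ω, ENNReal.ofReal (⟪X ω, Y ω⟫ ^ 2) ∂P = ∫⁻ ω, ENNReal.ofReal (‖X ω‖ ^ 2) ∂P := by
  classical
  have hint : ∀ i j, Integrable (fun ω => Y ω i * Y ω j) P := fun i j => by
    refine .of_bound (by fun_prop) 1 ?_
    filter_upwards [(hrad i).ae_eq_one_or_eq_neg_one (by fun_prop),
      (hrad j).ae_eq_one_or_eq_neg_one (by fun_prop)] with ω hi hj
    rcases hi with hi | hi <;> rcases hj with hj | hj <;> simp [hi, hj]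
  rw [hXY.lintegral_comp_eq_lintegral_lintegral hX hY (φ := fun x y => ENNReal.ofReal (⟪x, y⟫ ^ 2))
    (by fun_prop)]
  exact lintegral_congr fun ω => lintegral_ofReal_inner_sq_of_isotropic hint
    (integral_coord_mul_coord_of_isRademacher hY hrad hindep) (X ω)

theorem lintegral_gap_forwardGradient_step_add_mul_le [IsProbabilityMeasure P] {d : ℕ}
    {f : EuclideanSpace ℝ (Fin d) → ℝ} {μ L : ℝ} (hf : Differentiable ℝ f) (hμ : 0 < μ)
    (hsc : ∀ x y : EuclideanSpace ℝ (Fin d),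
      f y + ⟪gradient f y, x - y⟫ + μ / 2 * ‖x - y‖ ^ 2 ≤ f x)
    (hlip : ∀ x y, ‖gradient f x - gradient f y‖ ≤ L * ‖x - y‖)
    {θs : EuclideanSpace ℝ (Fin d)} (hmin : ∀ x, f θs ≤ f x) {α : ℝ} (hα : 0 ≤ α)
    (hαLd : α * L * d ≤ 1) {X V : Ω → EuclideanSpace ℝ (Fin d)} (hXV : IndepFun X V P)
    (hX : Measurable X) (hV : Measurable V) (hrad : ∀ i, IsRademacher (fun ω => V ω i) P)
    (hindep : ∀ i j, i ≠ j → IndepFun (fun ω => V ω i) (fun ω => V ω j) P) :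
    ∫⁻ ω, ENNReal.ofReal (f (X ω - α • forwardGradient f (X ω) (V ω)) - f θs) ∂P
        + ENNReal.ofReal (α * μ) * ∫⁻ ω, ENNReal.ofReal (f (X ω) - f θs) ∂P
      ≤ ∫⁻ ω, ENNReal.ofReal (f (X ω) - f θs) ∂P := by
  have hgrad := continuous_gradient_of_lipschitz hlip
  have hnormV : ∀ᵐ ω ∂P, ‖V ω‖ ^ 2 = d := by
    filter_upwards [ae_all_iff.2 fun i => (hrad i).ae_eq_one_or_eq_neg_one (by fun_prop)] with ω hω
    have hsq : ∀ i, V ω i ^ 2 = 1 := fun i => by rcases hω i with h | h <;> simp [h]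
    simp [EuclideanSpace.real_norm_sq_eq, hsq]
  have hdescent : ∀ᵐ ω ∂P,
      ENNReal.ofReal (f (X ω - α • forwardGradient f (X ω) (V ω)) - f θs)
        + ENNReal.ofReal (α / 2) * ENNReal.ofReal (⟪gradient f (X ω), V ω⟫ ^ 2)
      ≤ ENNReal.ofReal (f (X ω) - f θs) := by
    filter_upwards [hnormV] with ω hω
    have := apply_sub_smul_forwardGradient_le hf hlip hα (x := X ω) (hω ▸ hαLd)
    rw [← ENNReal.ofReal_mul (by positivity), ← ENNReal.ofReal_add (sub_nonneg.2 (hmin _))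
      (by positivity)]
    exact ENNReal.ofReal_le_ofReal (by linarith)
  have hPL : ∀ ω, ENNReal.ofReal (α * μ) * ENNReal.ofReal (f (X ω) - f θs)
      ≤ ENNReal.ofReal (α / 2) * ENNReal.ofReal (‖gradient f (X ω)‖ ^ 2) := fun ω => by
    rw [← ENNReal.ofReal_mul (by positivity), ← ENNReal.ofReal_mul (by positivity)]
    exact ENNReal.ofReal_le_ofReal (by
      nlinarith [two_mul_sub_le_norm_gradient_sq hμ hsc θs (X ω)])
  have hsecond := lintegral_ofReal_inner_sq_of_isRademacher
    (hXV.comp hgrad.measurable measurable_id) (hgrad.measurable.comp hX) hV hrad hindep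
  calc _ ≤ ∫⁻ ω, ENNReal.ofReal (f (X ω - α • forwardGradient f (X ω) (V ω)) - f θs) ∂P
          + ENNReal.ofReal (α / 2) * ∫⁻ ω, ENNReal.ofReal (‖gradient f (X ω)‖ ^ 2) ∂P := by
        rw [← lintegral_const_mul' _ _ ENNReal.ofReal_ne_top,
          ← lintegral_const_mul' _ _ ENNReal.ofReal_ne_top]
        exact add_le_add_right (lintegral_mono hPL) _
    _ = ∫⁻ ω, ENNReal.ofReal (f (X ω - α • forwardGradient f (X ω) (V ω)) - f θs) ∂P
          + ∫⁻ ω, ENNReal.ofReal (α / 2) * ENNReal.ofReal (⟪gradient f (X ω), V ω⟫ ^ 2) ∂P := by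
        rw [lintegral_const_mul' _ _ ENNReal.ofReal_ne_top]
        exact congrArg _ (congrArg _ hsecond.symm)
    _ ≤ _ := (le_lintegral_add _ _).trans (lintegral_mono_ae hdescent)

end Probability

section StepSigmaAlgebra

variable {Ω : Type*} {d : ℕ} (v : ℕ → Ω → EuclideanSpace ℝ (Fin d))

abbrev stepSigmaAlgebra (S : Set ℕ) : MeasurableSpace Ω :=
  ⨆ p ∈ Prod.fst ⁻¹' S, MeasurableSpace.comap (fun ω => v p.1 ω p.2) inferInstance

variable {v}

theorem stepSigmaAlgebra_mono {S T : Set ℕ} (hST : S ⊆ T) :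
    stepSigmaAlgebra v S ≤ stepSigmaAlgebra v T :=
  biSup_mono fun _ hp => hST hp

theorem stepSigmaAlgebra_le [MeasurableSpace Ω] (hv : ∀ k, Measurable (v k)) (S : Set ℕ) :
    stepSigmaAlgebra v S ≤ ‹MeasurableSpace Ω› :=
  iSup₂_le fun p _ => (show Measurable fun ω => v p.1 ω p.2 by fun_prop).comap_le

theorem measurable_stepSigmaAlgebra {S : Set ℕ} {k : ℕ} (hk : k ∈ S) :
    Measurable[stepSigmaAlgebra v S] (v k) :=
  (WithLp.measurable_toLp 2 _).comp <| @measurable_pi_lambda Ω (Fin d) (fun _ => ℝ)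
    (stepSigmaAlgebra v S) _ (fun ω => (v k ω).ofLp) fun i =>
      measurable_iff_comap_le.2 <| le_iSup₂ (f := fun (p : ℕ × Fin d) (_ : p ∈ Prod.fst ⁻¹' S) =>
        MeasurableSpace.comap (fun ω => v p.1 ω p.2) inferInstance) (k, i) hk

theorem measurable_stepSigmaAlgebra_Iio_of_recursion {E : Type*} [MeasurableSpace E]
    {Φ : E → EuclideanSpace ℝ (Fin d) → E} (hΦ : Measurable (Function.uncurry Φ))
    {θ : ℕ → Ω → E} {θ0 : E} (h0 : ∀ ω, θ 0 ω = θ0)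
    (hrec : ∀ k ω, θ (k + 1) ω = Φ (θ k ω) (v k ω)) (k : ℕ) :
    Measurable[stepSigmaAlgebra v (Set.Iio k)] (θ k) := by
  induction k with
  | zero => simpa only [funext h0] using measurable_const
  | succ k ih =>
    rw [funext (hrec k)]
    exact hΦ.comp ((ih.mono (stepSigmaAlgebra_mono (Set.Iio_subset_Iio k.le_succ)) le_rfl).prodMk
      (measurable_stepSigmaAlgebra (Set.mem_Iio.2 k.lt_succ_self)))

theorem indepFun_of_measurable_stepSigmaAlgebra_Iio [MeasurableSpace Ω] {P : Measure Ω}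
    [IsProbabilityMeasure P]
    (hv : ∀ k, Measurable (v k)) (hindep : iIndepFun (fun (p : ℕ × Fin d) ω => v p.1 ω p.2) P)
    {E : Type*} [MeasurableSpace E] {X : Ω → E} {k : ℕ}
    (hX : Measurable[stepSigmaAlgebra v (Set.Iio k)] X) : IndepFun X (v k) P :=
  hindep.indepFun_of_measurable_biSup (fun p => by fun_prop)
    ((Set.disjoint_singleton_right.2 Set.self_notMem_Iio : Disjoint (Set.Iio k) {k}).preimage
      Prod.fst) hX
    (measurable_stepSigmaAlgebra (Set.mem_singleton k))

end StepSigmaAlgebra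

theorem forward_gradient_descent_convergence_general
    {Ω : Type*} [MeasurableSpace Ω] {P : Measure Ω} [IsProbabilityMeasure P]
    {d : ℕ} (f : EuclideanSpace ℝ (Fin d) → ℝ) (μ L : ℝ) (hμ : 0 < μ)
    (hf : Differentiable ℝ f)
    (hsc : ∀ x y : EuclideanSpace ℝ (Fin d),
      f y + ⟪gradient f y, x - y⟫ + μ / 2 * ‖x - y‖ ^ 2 ≤ f x)
    (hlip : ∀ x y, ‖gradient f x - gradient f y‖ ≤ L * ‖x - y‖)
    (θs : EuclideanSpace ℝ (Fin d)) (hmin : ∀ x, f θs ≤ f x)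
    (α : ℝ) (hα0 : 0 < α) (hα1 : α ≤ 1 / (L * d))
    (v : ℕ → Ω → EuclideanSpace ℝ (Fin d)) (hmeas : ∀ k, Measurable (v k))
    (hindep : iIndepFun
      (fun (p : ℕ × Fin d) ω => v p.1 ω p.2) P)
    (hrad : ∀ k i, P {ω | v k ω i = 1} = 1/2 ∧ P {ω | v k ω i = -1} = 1/2)
    (θ0 : EuclideanSpace ℝ (Fin d)) (θ : ℕ → Ω → EuclideanSpace ℝ (Fin d))
    (h0 : ∀ ω, θ 0 ω = θ0)
    (hrec : ∀ k ω, θ (k + 1) ω = θ k ω - α • (⟪gradient f (θ k ω), v k ω⟫ • v k ω)) :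
    ∀ k : ℕ, ∫ ω, (f (θ k ω) - f θs) ∂P ≤ (1 - α * μ) ^ k * (f θ0 - f θs) := by
  have hLd : 0 < L * d := one_div_pos.1 (hα0.trans_le hα1)
  have hαLd : α * L * d ≤ 1 := by rwa [le_div_iff₀ hLd, ← mul_assoc] at hα1
  have : NeZero d := ⟨by rintro rfl; simp at hLd⟩
  have hαμ : α * μ ≤ 1 := by
    have := le_of_strongConvex_of_lipschitz_gradient hsc hlip
    have : (1 : ℝ) ≤ d := Nat.one_le_cast.2 NeZero.one_le
    nlinarith
  have hgrad := continuous_gradient_of_lipschitz hlip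
  have hθ := measurable_stepSigmaAlgebra_Iio_of_recursion (v := v)
    (Φ := fun x w => x - α • forwardGradient f x w) (by unfold forwardGradient; fun_prop) h0 hrec
  have hθm (k : ℕ) : Measurable (θ k) := (hθ k).mono (stepSigmaAlgebra_le hmeas _) le_rfl
  have hstep (k : ℕ) : ∫⁻ ω, ENNReal.ofReal (f (θ (k + 1) ω) - f θs) ∂P
      + ENNReal.ofReal (α * μ) * ∫⁻ ω, ENNReal.ofReal (f (θ k ω) - f θs) ∂P
      ≤ ∫⁻ ω, ENNReal.ofReal (f (θ k ω) - f θs) ∂P := by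
    simp only [hrec]
    exact lintegral_gap_forwardGradient_step_add_mul_le hf hμ hsc hlip hmin hα0.le hαLd
      (indepFun_of_measurable_stepSigmaAlgebra_Iio hmeas hindep (hθ k))
      (hθm k) (hmeas k) (hrad k) fun i j hij =>
        hindep.indepFun (show ((k, i) : ℕ × Fin d) ≠ (k, j) by simp [hij])
  intro k
  have hbound :=
    ENNReal.le_ofReal_pow_mul_of_add_mul_le (b := f θ0 - f θs) (by positivity) hαμ (by simp [h0])
      hstep k
  rw [integral_eq_lintegral_of_nonneg_ae (.of_forall fun ω => sub_nonneg.2 (hmin _))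
    ((hf.continuous.measurable.comp (hθm k)).sub_const _).aestronglyMeasurable]
  exact ENNReal.toReal_le_of_le_ofReal
    (mul_nonneg (pow_nonneg (by linarith) k) (sub_nonneg.2 (hmin θ0))) hbound

/-- **Convergence of forward-gradient descent (no surrogate model).**
Let `f : ℝ^d → ℝ` be `μ`-strongly convex and `L`-smooth with global minimizer `θ*`,
let `α ∈ (0, 1/(Ld)]`, and let `(v_k)` be i.i.d. random vectors whose components are
independent Rademacher variables (all components over all steps are jointly independent).
For the forward-gradient descent sequence `θ_{k+1} = θ_k − α (∇f(θ_k)·v_k) v_k` started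
from a deterministic `θ₀`, we have
`E[f(θ_k) − f(θ*)] ≤ (1 − αμ)^k (f(θ₀) − f(θ*))` for all `k`. -/
theorem forward_gradient_descent_convergence
    {Ω : Type*} [MeasurableSpace Ω] {P : Measure Ω} [IsProbabilityMeasure P]
    {d : ℕ} (f : EuclideanSpace ℝ (Fin d) → ℝ) (μ L : ℝ) (hμ : 0 < μ) (hL : 0 < L)
    (hf : Differentiable ℝ f)
    (hsc : ∀ x y : EuclideanSpace ℝ (Fin d),
      f y + ⟪gradient f y, x - y⟫ + μ / 2 * ‖x - y‖ ^ 2 ≤ f x)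
    (hlip : ∀ x y, ‖gradient f x - gradient f y‖ ≤ L * ‖x - y‖)
    (θs : EuclideanSpace ℝ (Fin d)) (hmin : ∀ x, f θs ≤ f x)
    (α : ℝ) (hα0 : 0 < α) (hα1 : α ≤ 1 / (L * d))
    (v : ℕ → Ω → EuclideanSpace ℝ (Fin d)) (hmeas : ∀ k, Measurable (v k))
    (hindep : iIndepFun
      (fun (p : ℕ × Fin d) ω => v p.1 ω p.2) P)
    (hrad : ∀ k i, P {ω | v k ω i = 1} = 1/2 ∧ P {ω | v k ω i = -1} = 1/2)
    (θ0 : EuclideanSpace ℝ (Fin d)) (θ : ℕ → Ω → EuclideanSpace ℝ (Fin d))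
    (h0 : ∀ ω, θ 0 ω = θ0)
    (hrec : ∀ k ω, θ (k + 1) ω = θ k ω - α • (⟪gradient f (θ k ω), v k ω⟫ • v k ω)) :
    ∀ k : ℕ, ∫ ω, (f (θ k ω) - f θs) ∂P ≤ (1 - α * μ) ^ k * (f θ0 - f θs) :=
  forward_gradient_descent_convergence_general f μ L hμ hf hsc hlip θs hmin α hα0 hα1 v hmeas hindep
    hrad θ0 θ h0 hrec
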